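/- arXiv:math-ph/0209039 — 2 statements merged into one kernel-verified Lean document; each statement's English description precedes it below -/
import Mathlib

section
/- Let B_c > 0 and A⁰(y) = cos(2πy). Then for all l, m ∈ ℕ there exist real numbers c_{l,m} and d_{l,m} such that for all p ∈ ℝ: Ã⁰_{l,m}(p) = (1/2)·δ_{l,m} + c_{l,m}·cos(4πp) + d_{l,m}·sin(4πp); moreover c_{l,m} = 0 whenever m + l is odd, and d_{l,m} = 0 whenever m + l is even. -/
open Real MeasureTheory

/-- The `m`-th Weber–Hermite function (normalized Hermite function). -/
noncomputable def weberHermite (m : ℕ) (y : ℝ) : ℝ :=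
  ((-1 : ℝ) ^ m / Real.sqrt (Real.sqrt π * 2 ^ m * m.factorial)) *
    Real.exp (y ^ 2 / 2) * iteratedDeriv m (fun t => Real.exp (-t ^ 2)) y

/-- `Ã⁰_{l,m}(p) = √B_c ∫ (A⁰(y+p))² Ω_l(√B_c y) Ω_m(√B_c y) dy`. -/
noncomputable def Atilde0 (Bc : ℝ) (A0 : ℝ → ℝ) (l m : ℕ) (p : ℝ) : ℝ :=
  Real.sqrt Bc * ∫ y : ℝ, (A0 (y + p)) ^ 2 *
    weberHermite l (Real.sqrt Bc * y) * weberHermite m (Real.sqrt Bc * y)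

/-!
Expanding `cos² (2π (y + p)) = ½ + ½ cos (4πy + 4πp)` and substituting `u = √B_c y`, the constant
term is `½ ∫ Ω_l Ω_m = ½ δ_{l,m}`, and the coefficients of `cos 4πp` and `sin 4πp` are
`½ ∫ cos (4πu/√B_c) Ω_l Ω_m` and `-½ ∫ sin (4πu/√B_c) Ω_l Ω_m`. As `Ω_l Ω_m` has parity
`(-1)^(l+m)`, one of these two integrands is odd and integrates to zero.

Orthonormality comes from `Ω_m y = He_m (√2 y) e^{-y²/2} / √(√π m!)`, where `He_m` is Mathlib's
(probabilists') `hermite m`, and `m`-fold integration by parts against the derivatives of the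
Gaussian `e^{-x²/2}`.
-/

open Polynomial
open scoped Nat

theorem integral_exp_neg_sq_div_two : ∫ x : ℝ, exp (-(x ^ 2 / 2)) = √(2 * π) := by
  convert integral_gaussian (1 / 2) using 3 <;> ring_nf

namespace Polynomial

theorem integrable_eval_mul_gaussian (P : ℝ[X]) :
    Integrable fun x : ℝ => P.eval x * exp (-(x ^ 2 / 2)) := by
  induction P using Polynomial.induction_on' with
  | add p q hp hq => simp only [eval_add, add_mul]; exact hp.add hq
  | monomial n a =>
    have h := integrable_rpow_mul_exp_neg_mul_sq (b := 1 / 2) (by norm_num) (s := n)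
      (by linarith [n.cast_nonneg (α := ℝ)])
    simp only [rpow_natCast] at h
    simpa [mul_assoc, neg_div, div_eq_inv_mul] using h.const_mul a

theorem iterate_deriv_gaussian (n : ℕ) :
    deriv^[n] (fun y : ℝ => exp (-(y ^ 2 / 2))) = fun x =>
      (C ((-1) ^ n) * (hermite n).map (algebraMap ℤ ℝ)).eval x * exp (-(x ^ 2 / 2)) := by
  ext x
  rw [deriv_gaussian_eq_hermite_mul_gaussian, eval_mul, eval_C, eval_map_algebraMap]

theorem integrable_eval_mul_iterate_deriv_gaussian (P : ℝ[X]) (n : ℕ) :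
    Integrable fun x => P.eval x * deriv^[n] (fun y : ℝ => exp (-(y ^ 2 / 2))) x := by
  simpa only [iterate_deriv_gaussian, ← mul_assoc, ← eval_mul]
    using integrable_eval_mul_gaussian _

theorem hasDerivAt_iterate_deriv_gaussian (n : ℕ) (x : ℝ) :
    HasDerivAt (deriv^[n] fun y : ℝ => exp (-(y ^ 2 / 2)))
      (deriv^[n + 1] (fun y : ℝ => exp (-(y ^ 2 / 2))) x) x := by
  have hdiff : Differentiable ℝ (deriv^[n] fun y : ℝ => exp (-(y ^ 2 / 2))) := by
    rw [iterate_deriv_gaussian]; fun_prop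
  rw [Function.iterate_succ_apply']
  exact (hdiff x).hasDerivAt

theorem integral_eval_mul_iterate_deriv_gaussian (P : ℝ[X]) (n : ℕ) :
    ∫ x, P.eval x * deriv^[n] (fun y : ℝ => exp (-(y ^ 2 / 2))) x =
      (-1) ^ n * ∫ x, (derivative^[n] P).eval x * exp (-(x ^ 2 / 2)) := by
  induction n generalizing P with
  | zero => simp
  | succ n ih =>
    rw [integral_mul_deriv_eq_deriv_mul_of_integrable (fun x _ => P.hasDerivAt x)
        (fun x _ => hasDerivAt_iterate_deriv_gaussian n x)
        (integrable_eval_mul_iterate_deriv_gaussian P (n + 1))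
        (integrable_eval_mul_iterate_deriv_gaussian _ n)
        (integrable_eval_mul_iterate_deriv_gaussian P n),
      ih, Function.iterate_succ_apply, pow_succ]
    ring

theorem iterate_derivative_hermite_self (n : ℕ) : derivative^[n] (hermite n) = (n ! : ℤ[X]) := by
  have hdeg : (derivative^[n] (hermite n)).natDegree ≤ 0 := by
    have := natDegree_iterate_derivative (hermite n) n
    rw [natDegree_hermite] at this
    omega
  rw [eq_C_of_natDegree_le_zero hdeg, coeff_iterate_derivative, zero_add, coeff_hermite_self,
    Nat.descFactorial_self, nsmul_one, C_eq_natCast]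

theorem integral_hermite_mul_hermite_mul_gaussian (l m : ℕ) :
    ∫ x : ℝ, aeval x (hermite l) * aeval x (hermite m) * exp (-(x ^ 2 / 2)) =
      if l = m then m ! * √(2 * π) else 0 := by
  wlog hlm : l ≤ m generalizing l m
  · simp_rw [mul_comm (aeval _ (hermite l)), this m l (by omega), eq_comm (a := m)]
    split_ifs with h <;> simp [h]
  have key : ∀ x : ℝ, aeval x (hermite l) * aeval x (hermite m) * exp (-(x ^ 2 / 2)) =
      (-1) ^ m * ((hermite l).map (algebraMap ℤ ℝ)).eval x *
        deriv^[m] (fun y : ℝ => exp (-(y ^ 2 / 2))) x := by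
    intro x
    rw [deriv_gaussian_eq_hermite_mul_gaussian, eval_map_algebraMap]
    ring_nf
    simp
  simp_rw [key, mul_assoc, integral_const_mul, integral_eval_mul_iterate_deriv_gaussian,
    iterate_derivative_map, ← mul_assoc, ← mul_pow, neg_one_mul, neg_neg, one_pow, one_mul]
  rcases hlm.lt_or_eq with hlt | rfl
  · rw [iterate_derivative_eq_zero (by rwa [natDegree_hermite]), if_neg hlt.ne]
    simp
  · rw [iterate_derivative_hermite_self, if_pos rfl, Polynomial.map_natCast]
    simp only [eval_natCast, integral_const_mul, integral_exp_neg_sq_div_two]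

end Polynomial

theorem weberHermite_eq (m : ℕ) (y : ℝ) :
    weberHermite m y = aeval (√2 * y) (hermite m) * exp (-(y ^ 2 / 2)) / √(√π * m !) := by
  have hg : (fun t : ℝ => exp (-t ^ 2)) = fun t => exp (-((√2 * t) ^ 2 / 2)) := by
    ext t; rw [mul_pow, sq_sqrt zero_le_two]; ring_nf
  have hexp : exp (y ^ 2 / 2) * exp (-((√2 * y) ^ 2 / 2)) = exp (-(y ^ 2 / 2)) := by
    rw [← exp_add, mul_pow, sq_sqrt zero_le_two]; ring_nf
  have hnorm : √(√π * 2 ^ m * m !) = √2 ^ m * √(√π * m !) := by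
    have h2 : √((2 : ℝ) ^ m) = √2 ^ m := by
      rw [← sqrt_sq (pow_nonneg (sqrt_nonneg 2) m), ← pow_mul, mul_comm m 2, pow_mul,
        sq_sqrt zero_le_two]
    rw [mul_comm √π, mul_assoc, sqrt_mul (by positivity), h2]
  rw [weberHermite, hg, iteratedDeriv_comp_const_mul (f := fun u => exp (-(u ^ 2 / 2)))
    (by fun_prop), iteratedDeriv_eq_iterate]
  dsimp only
  rw [deriv_gaussian_eq_hermite_mul_gaussian, hnorm, ← hexp]
  field_simp
  rw [← pow_mul, pow_mul', neg_one_sq, one_pow, one_mul]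

theorem weberHermite_neg (m : ℕ) (y : ℝ) : weberHermite m (-y) = (-1) ^ m * weberHermite m y := by
  have h := iteratedDeriv_comp_neg m (fun t : ℝ => exp (-t ^ 2)) (-y)
  simp only [neg_sq, smul_eq_mul, neg_neg] at h
  rw [weberHermite, weberHermite, neg_sq, h]
  ring

theorem weberHermite_mul_weberHermite (l m : ℕ) (y : ℝ) :
    weberHermite l y * weberHermite m y =
      aeval (√2 * y) (hermite l) * aeval (√2 * y) (hermite m) * exp (-((√2 * y) ^ 2 / 2)) /
        (√(√π * l !) * √(√π * m !)) := by
  have hexp : exp (-(y ^ 2 / 2)) * exp (-(y ^ 2 / 2)) = exp (-((√2 * y) ^ 2 / 2)) := by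
    rw [← exp_add, mul_pow, sq_sqrt zero_le_two]; ring_nf
  rw [weberHermite_eq, weberHermite_eq, ← hexp]
  ring

theorem integrable_weberHermite_mul_weberHermite (l m : ℕ) :
    Integrable fun y => weberHermite l y * weberHermite m y := by
  have h := ((integrable_eval_mul_gaussian ((hermite l * hermite m).map (algebraMap ℤ ℝ))
    ).comp_mul_left' (sqrt_ne_zero'.mpr two_pos)).div_const (√(√π * l !) * √(√π * m !))
  simpa only [weberHermite_mul_weberHermite, eval_map_algebraMap, map_mul] using h

theorem integral_weberHermite_mul_weberHermite (l m : ℕ) :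
    ∫ y, weberHermite l y * weberHermite m y = if l = m then 1 else 0 := by
  simp_rw [weberHermite_mul_weberHermite, integral_div]
  rw [Measure.integral_comp_mul_left (fun x => aeval x (hermite l) * aeval x (hermite m) *
    exp (-(x ^ 2 / 2))), integral_hermite_mul_hermite_mul_gaussian]
  split_ifs with h
  · subst h
    rw [mul_self_sqrt (by positivity), sqrt_mul zero_le_two, abs_of_pos (by positivity),
      smul_eq_mul]
    field_simp
  · simp

theorem weberHermite_mul_weberHermite_neg (l m : ℕ) (y : ℝ) :
    weberHermite l (-y) * weberHermite m (-y) =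
      (-1) ^ (l + m) * (weberHermite l y * weberHermite m y) := by
  rw [weberHermite_neg, weberHermite_neg, pow_add]
  ring

theorem integral_eq_zero_of_odd {E : Type*} [NormedAddCommGroup E] [NormedSpace ℝ E] {f : ℝ → E}
    (hf : Function.Odd f) : ∫ x, f x = 0 := by
  have h := integral_neg_eq_self f volume
  simp only [hf _, integral_neg] at h
  have h2 : (2 : ℝ) • ∫ x, f x = 0 := by
    rw [two_smul]
    nth_rw 1 [← h]
    exact neg_add_cancel _
  exact (smul_eq_zero.mp h2).resolve_left two_ne_zero

theorem integral_cos_sq_mul {W : ℝ → ℝ} (hW : Integrable W) (a b : ℝ) :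
    ∫ y, cos (a * y + b) ^ 2 * W y =
      (∫ y, W y) / 2 + cos (2 * b) / 2 * (∫ y, cos (2 * a * y) * W y)
        - sin (2 * b) / 2 * ∫ y, sin (2 * a * y) * W y := by
  have hcos : Integrable fun y => cos (2 * a * y) * W y :=
    hW.bdd_mul (by fun_prop) (ae_of_all _ fun y => abs_cos_le_one _)
  have hsin : Integrable fun y => sin (2 * a * y) * W y :=
    hW.bdd_mul (by fun_prop) (ae_of_all _ fun y => abs_sin_le_one _)
  have hpt : ∀ y, cos (a * y + b) ^ 2 * W y = W y / 2 + cos (2 * b) / 2 * (cos (2 * a * y) * W y)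
      - sin (2 * b) / 2 * (sin (2 * a * y) * W y) := by
    intro y
    rw [cos_sq, show 2 * (a * y + b) = 2 * a * y + 2 * b by ring, cos_add]
    ring
  simp_rw [hpt]
  rw [integral_sub, integral_add, integral_div, integral_const_mul, integral_const_mul]
  exacts [hW.div_const 2, hcos.const_mul _, (hW.div_const 2).add (hcos.const_mul _),
    hsin.const_mul _]

theorem Atilde0_eq_integral {Bc : ℝ} (hBc : 0 < Bc) (A0 : ℝ → ℝ) (l m : ℕ) (p : ℝ) :
    Atilde0 Bc A0 l m p = ∫ u, A0 (u / √Bc + p) ^ 2 * (weberHermite l u * weberHermite m u) := by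
  have hs : 0 < √Bc := sqrt_pos.mpr hBc
  rw [Atilde0, ← abs_of_pos hs, ← smul_eq_mul, ← Measure.integral_comp_div, abs_of_pos hs]
  congr 1 with u
  rw [mul_div_cancel₀ _ hs.ne', mul_assoc]

/-- **For `A⁰(y) = cos(2πy)`,**
`Ã⁰_{l,m}(p) = ½δ_{l,m} + c_{l,m} cos(4πp) + d_{l,m} sin(4πp)` with
`c_{l,m} = 0` if `m + l` is odd and `d_{l,m} = 0` if `m + l` is even. -/
theorem Atilde0_cos (Bc : ℝ) (hBc : 0 < Bc) (l m : ℕ) :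
    ∃ c d : ℝ,
      (∀ p : ℝ, Atilde0 Bc (fun y => Real.cos (2 * π * y)) l m p =
        (1 / 2) * (if l = m then 1 else 0)
          + c * Real.cos (4 * π * p) + d * Real.sin (4 * π * p)) ∧
      (Odd (m + l) → c = 0) ∧ (Even (m + l) → d = 0) := by
  set k := 2 * π / √Bc
  refine ⟨(∫ u, cos (2 * k * u) * (weberHermite l u * weberHermite m u)) / 2,
    -(∫ u, sin (2 * k * u) * (weberHermite l u * weberHermite m u)) / 2, fun p => ?_,
    fun hodd => ?_, fun heven => ?_⟩
  · have harg : ∀ u, 2 * π * (u / √Bc + p) = k * u + 2 * π * p := fun u => by ring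
    simp_rw [Atilde0_eq_integral hBc, harg,
      integral_cos_sq_mul (integrable_weberHermite_mul_weberHermite l m),
      integral_weberHermite_mul_weberHermite, show 2 * (2 * π * p) = 4 * π * p by ring]
    ring
  · rw [integral_eq_zero_of_odd, zero_div]
    intro u
    dsimp only
    rw [weberHermite_mul_weberHermite_neg, Odd.neg_one_pow (by rwa [add_comm]), mul_neg, cos_neg]
    ring
  · rw [integral_eq_zero_of_odd, neg_zero, zero_div]
    intro u
    dsimp only
    rw [weberHermite_mul_weberHermite_neg, Even.neg_one_pow (by rwa [add_comm]), mul_neg, sin_neg]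
    ring
end

section
/- Let c > 0 and l, m ∈ ℕ. Then there exists a constant C > 0 such that for every bounded continuous function f : ℝ → ℂ and every a ∈ ℝ: |∫_ℝ f(y)·Ω_l(c(y+a))·Ω_m(c·y) dy| ≤ C·(sup_{y∈ℝ} |f(y)|)·e^{−c²a²/8}. (In particular, the overlap coefficients of Weber–Hermite functions whose centers are shifted by a decay exponentially in the shift; this yields the exponential decay in k of the coefficients Ã¹⁽ᵏ⁾_{l,m} and Â¹⁽ᵏ⁾_{l,m}.) -/
open Real

/-!
Each Weber–Hermite function is a polynomial times `e^{-y²/2}`, and a polynomial is dominated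
by `e^{y²/4}`, so `|Ω_m y| ≤ K e^{-y²/4}`. The product `Ω_l(c(y+a)) Ω_m(cy)` is then dominated
by `e^{-c²((y+a)² + y²)/4} = e^{-c²a²/8} e^{-(c²/2)(y+a/2)²}`: completing the square splits off
the decay factor in `a`, and what remains is a Gaussian whose integral `√(2π/c²)` does not
depend on `a`.
-/

open Polynomial MeasureTheory

lemma exists_iteratedDeriv_exp_neg_sq_eq (m : ℕ) :
    ∃ p : ℝ[X], iteratedDeriv m (fun t => exp (-t ^ 2)) = fun y => p.eval y * exp (-y ^ 2) := by
  induction m with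
  | zero => exact ⟨1, by ext; simp⟩
  | succ n ih =>
    obtain ⟨p, hp⟩ := ih
    refine ⟨derivative p - C 2 * X * p, funext fun y => ?_⟩
    have hsq : HasDerivAt (fun t : ℝ => -t ^ 2) (-(2 * y)) y := by
      simpa using (hasDerivAt_pow 2 y).fun_neg
    rw [iteratedDeriv_succ, hp, ((p.hasDerivAt y).fun_mul hsq.exp).deriv]
    simp only [eval_sub, eval_mul, eval_C, eval_X]
    ring

lemma abs_pow_le_mul_exp_mul_sq {ε : ℝ} (hε : 0 < ε) (n : ℕ) (y : ℝ) :
    |y| ^ n ≤ (1 + n.factorial / ε ^ n) * exp (ε * y ^ 2) := by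
  have h_one : 1 ≤ exp (ε * y ^ 2) := one_le_exp (by positivity)
  have h_even : y ^ (2 * n) ≤ n.factorial / ε ^ n * exp (ε * y ^ 2) := by
    have h := pow_div_factorial_le_exp (x := ε * y ^ 2) (by positivity) n
    rw [div_le_iff₀ (Nat.cast_pos.mpr n.factorial_pos), mul_pow, ← pow_mul] at h
    rw [div_mul_eq_mul_div, le_div_iff₀ (pow_pos hε n)]
    linarith
  have h_split : |y| ^ n ≤ 1 + y ^ (2 * n) := by
    rcases le_or_gt |y| 1 with hy | hy
    · have := pow_le_one₀ (abs_nonneg y) hy (n := n)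
      have := (even_two_mul n).pow_nonneg y
      linarith
    · have := pow_le_pow_right₀ hy.le (show n ≤ 2 * n by omega)
      rw [(even_two_mul n).pow_abs] at this
      linarith
  calc |y| ^ n ≤ 1 + y ^ (2 * n) := h_split
    _ ≤ exp (ε * y ^ 2) + n.factorial / ε ^ n * exp (ε * y ^ 2) := add_le_add h_one h_even
    _ = (1 + n.factorial / ε ^ n) * exp (ε * y ^ 2) := by ring

lemma exists_abs_eval_le_mul_exp_mul_sq (p : ℝ[X]) {ε : ℝ} (hε : 0 < ε) :
    ∃ K, 0 < K ∧ ∀ y, |p.eval y| ≤ K * exp (ε * y ^ 2) := by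
  set K := ∑ i ∈ Finset.range (p.natDegree + 1), |p.coeff i| * (1 + i.factorial / ε ^ i)
  refine ⟨K + 1, by positivity, fun y => ?_⟩
  calc |p.eval y| ≤ ∑ i ∈ Finset.range (p.natDegree + 1), |p.coeff i| * |y| ^ i := by
        rw [eval_eq_sum_range]
        refine (Finset.abs_sum_le_sum_abs _ _).trans_eq ?_
        simp only [abs_mul, abs_pow]
    _ ≤ K * exp (ε * y ^ 2) := by
        rw [Finset.sum_mul]
        refine Finset.sum_le_sum fun i _ => ?_
        rw [mul_assoc]
        exact mul_le_mul_of_nonneg_left (abs_pow_le_mul_exp_mul_sq hε i y) (abs_nonneg _)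
    _ ≤ (K + 1) * exp (ε * y ^ 2) := by gcongr; linarith

lemma exists_abs_weberHermite_le (m : ℕ) :
    ∃ K, 0 < K ∧ ∀ y, |weberHermite m y| ≤ K * exp (-y ^ 2 / 4) := by
  obtain ⟨p, hp⟩ := exists_iteratedDeriv_exp_neg_sq_eq m
  obtain ⟨K, hK, hpK⟩ := exists_abs_eval_le_mul_exp_mul_sq p (ε := 1 / 4) (by norm_num)
  set c₀ : ℝ := (-1) ^ m / sqrt (sqrt π * 2 ^ m * m.factorial)
  have hc₀ : 0 < |c₀| := by positivity
  refine ⟨|c₀| * K, mul_pos hc₀ hK, fun y => ?_⟩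
  have h_exp : exp (y ^ 2 / 2) * exp (1 / 4 * y ^ 2) * exp (-y ^ 2) = exp (-y ^ 2 / 4) := by
    rw [← exp_add, ← exp_add]
    ring_nf
  calc |weberHermite m y| = |c₀| * exp (y ^ 2 / 2) * |p.eval y| * exp (-y ^ 2) := by
        simp only [weberHermite, hp, abs_mul, abs_exp, c₀]
        ring
    _ ≤ |c₀| * exp (y ^ 2 / 2) * (K * exp (1 / 4 * y ^ 2)) * exp (-y ^ 2) := by
        gcongr
        exact hpK y
    _ = |c₀| * K * exp (-y ^ 2 / 4) := by rw [← h_exp]; ring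

lemma norm_integral_le_of_norm_le_mul_gaussian {E : Type*} [NormedAddCommGroup E]
    [NormedSpace ℝ E] {F : ℝ → E} {A b : ℝ} (hb : 0 < b) (t : ℝ)
    (hF : ∀ y, ‖F y‖ ≤ A * exp (-b * (y + t) ^ 2)) :
    ‖∫ y, F y‖ ≤ A * sqrt (π / b) := by
  have h_int : Integrable fun y => A * exp (-b * (y + t) ^ 2) :=
    ((integrable_exp_neg_mul_sq hb).comp_add_right t).const_mul A
  refine (norm_integral_le_of_norm_le h_int (.of_forall hF)).trans_eq ?_
  rw [integral_const_mul, integral_add_right_eq_self (fun y => exp (-b * y ^ 2)), integral_gaussian]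

lemma exp_shifted_sq_mul_exp_sq (c a y : ℝ) :
    exp (-(c * (y + a)) ^ 2 / 4) * exp (-(c * y) ^ 2 / 4) =
      exp (-(c ^ 2 * a ^ 2) / 8) * exp (-(c ^ 2 / 2) * (y + a / 2) ^ 2) := by
  rw [← exp_add, ← exp_add]
  ring_nf

/-- **Exponential decay of shifted overlap integrals of Weber–Hermite
functions:** for `c > 0` and `l, m ∈ ℕ` there is `C > 0` such that for every
bounded continuous `f : ℝ → ℂ` and every shift `a`,
`|∫ f(y) Ω_l(c(y+a)) Ω_m(cy) dy| ≤ C (sup |f|) e^{−c²a²/8}`. -/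
theorem overlap_exponential_decay (c : ℝ) (hc : 0 < c) (l m : ℕ) :
    ∃ C : ℝ, 0 < C ∧
      ∀ f : ℝ → ℂ, Continuous f → (∃ M : ℝ, ∀ y : ℝ, ‖f y‖ ≤ M) →
        ∀ a : ℝ,
          ‖∫ y : ℝ, f y * (weberHermite l (c * (y + a)) : ℂ) *
              (weberHermite m (c * y) : ℂ)‖
            ≤ C * (⨆ y : ℝ, ‖f y‖) * Real.exp (-(c ^ 2 * a ^ 2) / 8) := by
  obtain ⟨Kl, hKl, hl⟩ := exists_abs_weberHermite_le l
  obtain ⟨Km, hKm, hm⟩ := exists_abs_weberHermite_le m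
  refine ⟨Kl * Km * sqrt (π / (c ^ 2 / 2)), by positivity, fun f _ ⟨M, hM⟩ a => ?_⟩
  set S := ⨆ y, ‖f y‖
  have hfS (y : ℝ) : ‖f y‖ ≤ S := le_ciSup ⟨M, by rintro _ ⟨y, rfl⟩; exact hM y⟩ y
  have hS : 0 ≤ S := (norm_nonneg _).trans (hfS 0)
  suffices h : ∀ y,
      ‖f y * (weberHermite l (c * (y + a)) : ℂ) * (weberHermite m (c * y) : ℂ)‖ ≤
        S * Kl * Km * exp (-(c ^ 2 * a ^ 2) / 8) * exp (-(c ^ 2 / 2) * (y + a / 2) ^ 2) by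
    refine (norm_integral_le_of_norm_le_mul_gaussian (by positivity) (a / 2) h).trans_eq ?_
    ring
  intro y
  calc _ = ‖f y‖ * |weberHermite l (c * (y + a))| * |weberHermite m (c * y)| := by
        simp only [norm_mul, Complex.norm_real, Real.norm_eq_abs]
    _ ≤ S * (Kl * exp (-(c * (y + a)) ^ 2 / 4)) * (Km * exp (-(c * y) ^ 2 / 4)) := by
        gcongr
        exacts [hfS y, hl _, hm _]
    _ = S * Kl * Km * (exp (-(c * (y + a)) ^ 2 / 4) * exp (-(c * y) ^ 2 / 4)) := by ring
    _ = _ := by rw [exp_shifted_sq_mul_exp_sq]; ring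
end
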